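/- Let P and F0 be probability measures on R+ with P({0}) < 1, let A = F0 * Σ_{i≥0} P^{*(i)} be the renewal measure with cumulative function A(τ) = A([0,τ]), and let τ(t) = A†(t) be its generalized inverse. Assume A(·) is strictly increasing on [0,∞) (so that τ(·) is continuous). Let F_t denote the renewal-scaled solution, i.e. the probability measure on R+ with Laplace transform F̂_t(q) = (1 − P̂(q)) ∫_t^∞ e^{-q(τ(s) − τ(t))} ds for q > 0. Then for t > 0 the map t ↦ F_t is continuous into the space of probability measures on R+ equipped with the topology of weak convergence. -/

import Mathlib

/-!
`τ = A†` is continuous: `A` is strictly increasing and unbounded on `[0, ∞)` (the renewal measure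
has infinite mass there), so `τ` maps `ℝ` monotonically onto `[0, ∞)` and cannot jump. Writing
`F̂_t(q) = (1 - P̂(q)) e^{q τ(t)} ∫_t^∞ e^{-q τ(s)} ds`, each Laplace transform `t ↦ F̂_t(q)` is
therefore continuous on `[0, ∞)`.

Convergence of Laplace transforms of probability measures on `[0, ∞)` implies weak convergence:
the tail bound `μ(M, ∞) (1 - e^{-qM}) ≤ 1 - μ̂(q)` with `q` small gives tightness, and the bounded
continuous functions that are polynomials in `e^{-x}` on `[0, ∞)` form a point-separating algebra
on which the integrals converge, so Prokhorov's theorem identifies every limit point.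
-/

open MeasureTheory Set Filter Topology

/-- Convolution of two measures on `ℝ`:
`(μ*ν)(E) = ∫∫ 1_E(x+y) μ(dx) ν(dy)`. -/
noncomputable def measConv (μ ν : MeasureTheory.Measure ℝ) : MeasureTheory.Measure ℝ :=
  MeasureTheory.Measure.map (fun z : ℝ × ℝ => z.1 + z.2) (μ.prod ν)

/-- Weak convergence of a sequence of measures: convergence of integrals of all
bounded continuous functions. -/
def WeakTendsto (μs : ℕ → MeasureTheory.Measure ℝ) (μ : MeasureTheory.Measure ℝ) : Prop :=
  ∀ f : BoundedContinuousFunction ℝ ℝ,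
    Filter.Tendsto (fun n => ∫ x, f x ∂(μs n)) Filter.atTop (nhds (∫ x, f x ∂μ))

/-- `i`-fold self-convolution `P^{*(i)}`, with `P^{*(0)} = δ₀`. -/
noncomputable def measIter (P : MeasureTheory.Measure ℝ) : ℕ → MeasureTheory.Measure ℝ
  | 0 => MeasureTheory.Measure.dirac 0
  | (i + 1) => measConv (measIter P i) P

/-- The renewal measure `A = F0 * Σ_{i≥0} P^{*(i)}`. -/
noncomputable def renewalMeasure (F0 P : MeasureTheory.Measure ℝ) : MeasureTheory.Measure ℝ :=
  measConv F0 (MeasureTheory.Measure.sum (fun i : ℕ => measIter P i))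

/-- The Laplace transform `μ̂(q) = ∫_0^∞ e^{-qx} μ(dx)` of a measure on `ℝ₊`. -/
noncomputable def mLaplace (μ : MeasureTheory.Measure ℝ) (q : ℝ) : ℝ :=
  ∫ x, Real.exp (-q * x) ∂μ

/-- Cumulative function `τ ↦ μ([0,τ])` of a measure on `ℝ₊`. -/
noncomputable def cumul (μ : MeasureTheory.Measure ℝ) (τ : ℝ) : ℝ :=
  (μ (Set.Icc 0 τ)).toReal

/-- Generalized inverse `f†(t) = inf{s ≥ 0 : f(s) > t}` of a nondecreasing
function `f : ℝ₊ → ℝ₊`. -/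
noncomputable def genInv (f : ℝ → ℝ) (t : ℝ) : ℝ :=
  sInf {s : ℝ | 0 ≤ s ∧ t < f s}

open BoundedContinuousFunction Polynomial

lemma norm_exp_neg_mul_le_one {q x : ℝ} (hq : 0 ≤ q) (hx : 0 ≤ x) :
    ‖Real.exp (-q * x)‖ ≤ 1 := by
  rw [Real.norm_of_nonneg (Real.exp_pos _).le, Real.exp_le_one_iff, neg_mul, neg_nonpos]
  positivity

namespace MeasureTheory

lemma ae_nonneg_of_measure_Iio_eq_zero {μ : Measure ℝ} (hμ : μ (Iio 0) = 0) :
    ∀ᵐ x ∂μ, 0 ≤ x :=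
  ae_iff.2 <| by simp only [not_le]; exact hμ

variable {μ : Measure ℝ}

lemma integrable_exp_neg_mul [IsFiniteMeasure μ] (hμ : μ (Iio 0) = 0) {q : ℝ} (hq : 0 ≤ q) :
    Integrable (fun x => Real.exp (-q * x)) μ :=
  (integrable_const 1).mono' (by fun_prop) <|
    (ae_nonneg_of_measure_Iio_eq_zero hμ).mono fun _ hx => norm_exp_neg_mul_le_one hq hx

lemma tendsto_integral_exp_neg_mul_nhdsGT_zero [IsProbabilityMeasure μ] (hμ : μ (Iio 0) = 0) :
    Tendsto (fun q => ∫ x, Real.exp (-q * x) ∂μ) (𝓝[>] 0) (𝓝 1) := by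
  have h := tendsto_integral_filter_of_dominated_convergence (μ := μ) (l := 𝓝[>] (0:ℝ))
    (F := fun q x => Real.exp (-q * x)) (f := fun x => Real.exp (-0 * x)) (fun _ => 1)
    (.of_forall fun _ => by fun_prop)
    (eventually_mem_nhdsWithin.mono fun q hq => (ae_nonneg_of_measure_Iio_eq_zero hμ).mono
      fun _ hx => norm_exp_neg_mul_le_one (le_of_lt hq) hx)
    (integrable_const 1) (.of_forall fun x =>
      ((by fun_prop : Continuous fun q : ℝ => Real.exp (-q * x)).tendsto 0).mono_left
        nhdsWithin_le_nhds)
  simpa using h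

lemma measureReal_Ioi_mul_le_one_sub_integral_exp [IsProbabilityMeasure μ] (hμ : μ (Iio 0) = 0)
    {q : ℝ} (hq : 0 ≤ q) (M : ℝ) :
    μ.real (Ioi M) * (1 - Real.exp (-q * M)) ≤ 1 - ∫ x, Real.exp (-q * x) ∂μ := by
  have hint := integrable_exp_neg_mul hμ hq
  calc μ.real (Ioi M) * (1 - Real.exp (-q * M))
      = ∫ x, (Ioi M).indicator (fun _ => 1 - Real.exp (-q * M)) x ∂μ := by
        rw [integral_indicator_const _ measurableSet_Ioi, smul_eq_mul]
    _ ≤ ∫ x, (1 - Real.exp (-q * x)) ∂μ := by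
        refine integral_mono_ae ((integrable_const _).indicator measurableSet_Ioi)
          ((integrable_const 1).sub hint) ?_
        filter_upwards [ae_nonneg_of_measure_Iio_eq_zero hμ] with x hx
        by_cases hxM : x ∈ Ioi M
        · rw [indicator_of_mem hxM]
          have : Real.exp (-q * x) ≤ Real.exp (-q * M) :=
            Real.exp_le_exp.2 (by nlinarith [mem_Ioi.1 hxM])
          linarith
        · rw [indicator_of_notMem hxM, sub_nonneg, ← Real.norm_of_nonneg (Real.exp_pos _).le]
          exact norm_exp_neg_mul_le_one hq hx
    _ = 1 - ∫ x, Real.exp (-q * x) ∂μ := by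
        rw [integral_sub (integrable_const 1) hint]; simp

lemma integral_eq_sum_coeff_mul_integral_exp [IsFiniteMeasure μ] (hμ : μ (Iio 0) = 0)
    {g : ℝ → ℝ} {Q : ℝ[X]} (hg : ∀ x, 0 ≤ x → g x = Q.eval (Real.exp (-x))) :
    ∫ x, g x ∂μ = ∑ k ∈ Finset.range (Q.natDegree + 1),
      Q.coeff k * ∫ x, Real.exp (-k * x) ∂μ := by
  have hpow (k : ℕ) (x : ℝ) : Real.exp (-x) ^ k = Real.exp (-k * x) := by
    rw [← Real.exp_nat_mul]; ring_nf
  simp_rw [← integral_const_mul]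
  rw [← integral_finsetSum _ fun k _ =>
    (integrable_exp_neg_mul hμ (Nat.cast_nonneg k)).const_mul _]
  refine integral_congr_ae ?_
  filter_upwards [ae_nonneg_of_measure_Iio_eq_zero hμ] with x hx
  simp [hg x hx, eval_eq_sum_range, hpow]

noncomputable def expPolyStarSubalgebra : StarSubalgebra ℝ (ℝ →ᵇ ℝ) where
  carrier := {g | ∃ Q : ℝ[X], ∀ x, 0 ≤ x → g x = Q.eval (Real.exp (-x))}
  mul_mem' := by
    rintro f g ⟨P, hP⟩ ⟨Q, hQ⟩
    exact ⟨P * Q, fun x hx => by simp [hP x hx, hQ x hx]⟩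
  add_mem' := by
    rintro f g ⟨P, hP⟩ ⟨Q, hQ⟩
    exact ⟨P + Q, fun x hx => by simp [hP x hx, hQ x hx]⟩
  algebraMap_mem' r := ⟨C r, fun x _ => by simp [BoundedContinuousFunction.algebraMap_apply]⟩
  star_mem' := by
    rintro g ⟨Q, hQ⟩
    exact ⟨Q, fun x hx => by simpa using hQ x hx⟩

/-- `e^{-max x 0}` separates the points of `[0, ∞)`, `e^{min x 0}` those of `(-∞, 0]`. -/
lemma separatesPoints_expPolyStarSubalgebra :
    (expPolyStarSubalgebra.map (toContinuousMapStarₐ ℝ)).SeparatesPoints := by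
  let posPart : ℝ →ᵇ ℝ := mkOfBound ⟨fun x => Real.exp (-max x 0), by fun_prop⟩ 1 fun x y =>
    Real.dist_le_of_mem_Icc_01 ⟨(Real.exp_pos _).le, by simp⟩ ⟨(Real.exp_pos _).le, by simp⟩
  let negPart : ℝ →ᵇ ℝ := mkOfBound ⟨fun x => Real.exp (min x 0), by fun_prop⟩ 1 fun x y =>
    Real.dist_le_of_mem_Icc_01 ⟨(Real.exp_pos _).le, by simp⟩ ⟨(Real.exp_pos _).le, by simp⟩
  have hpos : posPart ∈ expPolyStarSubalgebra := ⟨X, fun x hx => by simp [posPart, hx]⟩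
  have hneg : negPart ∈ expPolyStarSubalgebra := ⟨1, fun x hx => by simp [negPart, hx]⟩
  intro x y hxy
  by_cases h : max x 0 = max y 0
  · refine ⟨_, ⟨_, ⟨negPart, hneg, rfl⟩, rfl⟩, ?_⟩
    have : min x 0 ≠ min y 0 := fun h' => hxy (by linarith [min_add_max x 0, min_add_max y 0])
    simpa [negPart] using this
  · refine ⟨_, ⟨_, ⟨posPart, hpos, rfl⟩, rfl⟩, ?_⟩
    simpa [posPart] using h

section LaplaceContinuity

variable {ι : Type*} {l : Filter ι} {μ : ι → ProbabilityMeasure ℝ} {μ₀ : ProbabilityMeasure ℝ}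

lemma exists_eventually_measureReal_Ioi_lt_of_tendsto_integral_exp
    (hμ : ∀ᶠ i in l, (μ i : Measure ℝ) (Iio 0) = 0) (hμ₀ : (μ₀ : Measure ℝ) (Iio 0) = 0)
    (h : ∀ q, 0 < q → Tendsto (fun i => ∫ x, Real.exp (-q * x) ∂(μ i)) l
      (𝓝 (∫ x, Real.exp (-q * x) ∂μ₀)))
    {δ : ℝ} (hδ : 0 < δ) : ∃ M, ∀ᶠ i in l, (μ i : Measure ℝ).real (Ioi M) < δ := by
  obtain ⟨q, hq₀, hq⟩ := (((tendsto_integral_exp_neg_mul_nhdsGT_zero hμ₀).eventually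
    (lt_mem_nhds (by linarith : 1 - δ / 4 < 1))).and self_mem_nhdsWithin).exists
  -- `e^{-q M} = 1/2` for this `M`, so the tail bound reads `μ(M, ∞) ≤ 2 (1 - μ̂(q))`.
  refine ⟨Real.log 2 / q, ?_⟩
  filter_upwards [hμ, (h q hq).eventually (lt_mem_nhds (by linarith : 1 - δ / 2 < _))]
    with i hi hLi
  have htail := measureReal_Ioi_mul_le_one_sub_integral_exp hi hq.le (Real.log 2 / q)
  rw [show -q * (Real.log 2 / q) = -Real.log 2 by field_simp, Real.exp_neg,
    Real.exp_log two_pos] at htail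
  linarith

lemma isTightMeasureSet_range_of_exists_eventually_measureReal_Ioi_lt
    {μ : ℕ → ProbabilityMeasure ℝ} (hμ : ∀ᶠ n in atTop, (μ n : Measure ℝ) (Iio 0) = 0)
    (h : ∀ δ, 0 < δ → ∃ M, ∀ᶠ n in atTop, (μ n : Measure ℝ).real (Ioi M) < δ) :
    IsTightMeasureSet {(μ n : Measure ℝ) | n} := by
  refine isTightMeasureSet_range_of_tendsto_limsup_measure_norm_gt
    (μ := fun n => (μ n : Measure ℝ)) ?_
  rw [ENNReal.tendsto_atTop_zero]
  intro ε hε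
  obtain ⟨δ, -, hδ, hδε⟩ := ENNReal.lt_iff_exists_real_btwn.1 hε
  obtain ⟨M, hM⟩ := h δ (ENNReal.ofReal_pos.1 hδ)
  refine ⟨M, fun r hr => limsup_le_of_le (by isBoundedDefault) ?_⟩
  filter_upwards [hμ, hM] with n hn hnM
  calc (μ n : Measure ℝ) {x | r < ‖x‖} ≤ (μ n : Measure ℝ) (Iio 0 ∪ Ioi M) := by
        refine measure_mono fun x hx => ?_
        rcases lt_or_ge x 0 with hx0 | hx0
        · exact Or.inl hx0
        · exact Or.inr (by simpa [abs_of_nonneg hx0] using hr.trans_lt hx)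
    _ ≤ (μ n : Measure ℝ) (Iio 0) + (μ n : Measure ℝ) (Ioi M) := measure_union_le _ _
    _ = ENNReal.ofReal ((μ n : Measure ℝ).real (Ioi M)) := by
        rw [hn, zero_add, ofReal_measureReal]
    _ ≤ ε := (ENNReal.ofReal_le_ofReal hnM.le).trans hδε.le

theorem ProbabilityMeasure.tendsto_of_tendsto_integral_exp [l.IsCountablyGenerated]
    (hμ : ∀ᶠ i in l, (μ i : Measure ℝ) (Iio 0) = 0) (hμ₀ : (μ₀ : Measure ℝ) (Iio 0) = 0)
    (h : ∀ q, 0 < q → Tendsto (fun i => ∫ x, Real.exp (-q * x) ∂(μ i)) l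
      (𝓝 (∫ x, Real.exp (-q * x) ∂μ₀))) :
    Tendsto μ l (𝓝 μ₀) := by
  rw [tendsto_iff_seq_tendsto]
  intro u hu
  have hμu := hu.eventually hμ
  refine ProbabilityMeasure.tendsto_of_tight_of_separatesPoints ℝ ?_
    separatesPoints_expPolyStarSubalgebra ?_
  · exact isTightMeasureSet_range_of_exists_eventually_measureReal_Ioi_lt hμu fun δ hδ =>
      (exists_eventually_measureReal_Ioi_lt_of_tendsto_integral_exp hμ hμ₀ h hδ).imp
        fun _ hM => hu.eventually hM
  · rintro g ⟨Q, hQ⟩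
    have hexp (k : ℕ) : Tendsto (fun n => ∫ x, Real.exp (-k * x) ∂(μ (u n))) atTop
        (𝓝 (∫ x, Real.exp (-k * x) ∂μ₀)) := by
      rcases k.eq_zero_or_pos with rfl | hk
      · simp
      · exact (h k (Nat.cast_pos.2 hk)).comp hu
    rw [integral_eq_sum_coeff_mul_integral_exp hμ₀ hQ]
    refine (tendsto_finsetSum _ fun k _ => (hexp k).const_mul _).congr' ?_
    filter_upwards [hμu] with n hn using (integral_eq_sum_coeff_mul_integral_exp hn hQ).symm

theorem ProbabilityMeasure.continuousOn_of_continuousOn_integral_exp {X : Type*}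
    [TopologicalSpace X] [FirstCountableTopology X] {F : X → ProbabilityMeasure ℝ} {s : Set X}
    (hF : ∀ t ∈ s, (F t : Measure ℝ) (Iio 0) = 0)
    (h : ∀ q, 0 < q → ContinuousOn (fun t => ∫ x, Real.exp (-q * x) ∂(F t)) s) :
    ContinuousOn F s := fun t ht =>
  tendsto_of_tendsto_integral_exp (eventually_mem_nhdsWithin.mono hF) (hF t ht)
    fun q hq => h q hq t ht

end LaplaceContinuity

end MeasureTheory

section GenInv

variable {f : ℝ → ℝ}

lemma nonempty_genInv_set (hf : Tendsto f atTop atTop) (t : ℝ) :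
    {s : ℝ | 0 ≤ s ∧ t < f s}.Nonempty :=
  ((eventually_ge_atTop 0).and (hf.eventually_gt_atTop t)).exists

lemma genInv_nonneg (hf : Tendsto f atTop atTop) (t : ℝ) : 0 ≤ genInv f t :=
  le_csInf (nonempty_genInv_set hf t) fun _ hs => hs.1

lemma monotone_genInv (hf : Tendsto f atTop atTop) : Monotone (genInv f) := fun _ _ htt' =>
  csInf_le_csInf ⟨0, fun _ hs => hs.1⟩ (nonempty_genInv_set hf _)
    fun _ hs => ⟨hs.1, htt'.trans_lt hs.2⟩

lemma genInv_apply_self (hf : StrictMonoOn f (Ici 0)) {s : ℝ} (hs : 0 ≤ s) :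
    genInv f (f s) = s := by
  have : {s' : ℝ | 0 ≤ s' ∧ f s < f s'} = Ioi s := by
    ext s'
    refine ⟨fun h => hf.lt_iff_lt hs h.1 |>.1 h.2, fun h => ?_⟩
    have hs' : 0 ≤ s' := hs.trans (le_of_lt h)
    exact ⟨hs', hf hs hs' h⟩
  rw [genInv, this, csInf_Ioi]

theorem continuous_genInv (hf : StrictMonoOn f (Ici 0)) (hf' : Tendsto f atTop atTop) :
    Continuous (genInv f) := by
  let g : ℝ → Ici (0 : ℝ) := codRestrict (genInv f) (Ici 0) (genInv_nonneg hf')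
  have hg : Continuous g := Monotone.continuous_of_surjective
    (fun _ _ h => monotone_genInv hf' h) fun s => ⟨f s, Subtype.ext (genInv_apply_self hf s.2)⟩
  exact continuous_subtype_val.comp hg

end GenInv

section Cumul

variable {μ : Measure ℝ}

lemma measure_Icc_ne_top_of_strictMonoOn_cumul (hμ : StrictMonoOn (cumul μ) (Ici 0)) (r : ℝ) :
    μ (Icc 0 r) ≠ ⊤ := by
  -- otherwise `cumul μ` would vanish (`ENNReal.toReal ⊤ = 0`) at both `r` and `r + 1`
  intro htop
  have hr : 0 ≤ r := by
    by_contra! hr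
    simp [Icc_eq_empty_of_lt hr] at htop
  have htop' : μ (Icc 0 (r + 1)) = ⊤ :=
    top_unique (htop ▸ measure_mono (Icc_subset_Icc_right (by linarith)))
  have := hμ hr (show (0 : ℝ) ≤ r + 1 by linarith) (by linarith)
  simp [cumul, htop, htop'] at this

lemma tendsto_cumul_atTop (hμ : μ (Ici 0) = ⊤) (hfin : ∀ r, μ (Icc 0 r) ≠ ⊤) :
    Tendsto (cumul μ) atTop atTop := by
  have hlim : Tendsto (fun r => μ (Icc 0 r)) atTop (𝓝 ⊤) := by
    have := tendsto_measure_iUnion_atTop (μ := μ) (s := fun r : ℝ => Icc 0 r)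
      fun _ _ h => Icc_subset_Icc_right h
    rwa [iUnion_Icc_right, hμ] at this
  refine tendsto_atTop.2 fun b => ?_
  filter_upwards [hlim.eventually (lt_mem_nhds (ENNReal.ofReal_lt_top (r := b)))] with r hr
  exact (ENNReal.ofReal_le_iff_le_toReal (hfin r)).1 hr.le

end Cumul

lemma measConv_Iio_eq_zero {μ ν : Measure ℝ} [SFinite ν] (hμ : μ (Iio 0) = 0)
    (hν : ν (Iio 0) = 0) : measConv μ ν (Iio 0) = 0 := by
  rw [measConv, Measure.map_apply (by fun_prop) measurableSet_Iio]
  refine measure_mono_null (t := Iio 0 ×ˢ univ ∪ univ ×ˢ Iio 0) ?_ ?_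
  · rintro ⟨x, y⟩ (hxy : x + y < 0)
    by_contra! h
    simp only [mem_union, mem_prod, mem_Iio, mem_univ, and_true, true_and, not_or, not_lt] at h
    linarith
  · simp [measure_union_null_iff, Measure.prod_prod, hμ, hν]

lemma measConv_univ (μ ν : Measure ℝ) [SFinite ν] : measConv μ ν univ = μ univ * ν univ := by
  rw [measConv, Measure.map_apply (by fun_prop) MeasurableSet.univ, preimage_univ,
    ← univ_prod_univ, Measure.prod_prod]

instance isProbabilityMeasure_measIter (P : Measure ℝ) [IsProbabilityMeasure P] (i : ℕ) :
    IsProbabilityMeasure (measIter P i) := by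
  induction i with
  | zero => exact Measure.dirac.isProbabilityMeasure
  | succ i ih => exact Measure.isProbabilityMeasure_map (by fun_prop)

lemma renewalMeasure_Ici_eq_top {F0 P : Measure ℝ} [IsProbabilityMeasure F0]
    [IsProbabilityMeasure P] (hF0 : F0 (Iio 0) = 0) (hP : P (Iio 0) = 0) :
    renewalMeasure F0 P (Ici 0) = ⊤ := by
  have hneg : renewalMeasure F0 P (Iio 0) = 0 := by
    refine measConv_Iio_eq_zero hF0 ?_
    rw [Measure.sum_apply _ measurableSet_Iio, ENNReal.tsum_eq_zero]
    intro i
    induction i with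
    | zero => simp [measIter]
    | succ i ih => exact measConv_Iio_eq_zero ih hP
  have huniv : renewalMeasure F0 P univ = ⊤ := by
    rw [renewalMeasure, measConv_univ, Measure.sum_apply _ MeasurableSet.univ]
    simp
  have := measure_union_le (μ := renewalMeasure F0 P) (Iio 0) (Ici 0)
  rwa [Iio_union_Ici, huniv, hneg, zero_add, top_le_iff] at this

lemma continuousOn_integral_Ici {g : ℝ → ℝ} (hg : Continuous g) {a : ℝ}
    (hint : IntegrableOn g (Ici a)) : ContinuousOn (fun t => ∫ s in Ici t, g s) (Ici a) := by
  have hprim : Continuous fun t => ∫ s in a..t, g s :=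
    intervalIntegral.continuous_primitive (fun _ _ => hg.intervalIntegrable _ _) a
  refine ((continuous_const (y := ∫ s in Ici a, g s)).sub hprim).continuousOn.congr
    fun t ht => ?_
  rw [Pi.sub_apply, ← intervalIntegral.integral_Ici_sub_Ici' hint
    (hint.mono_set (Ici_subset_Ici.2 ht)), sub_sub_cancel]

lemma continuousOn_integral_Ici_exp_neg_mul_sub {τ : ℝ → ℝ} (hτ : Continuous τ) {q a : ℝ}
    (hint : IntegrableOn (fun s => Real.exp (-q * (τ s - τ a))) (Ici a)) :
    ContinuousOn (fun t => ∫ s in Ici t, Real.exp (-q * (τ s - τ t))) (Ici a) := by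
  have hsplit (s t : ℝ) :
      Real.exp (-q * (τ s - τ t)) = Real.exp (q * τ t) * Real.exp (-q * τ s) := by
    rw [← Real.exp_add]; ring_nf
  have hint' : IntegrableOn (fun s => Real.exp (-q * τ s)) (Ici a) :=
    IntegrableOn.congr_fun (hint.const_mul (Real.exp (-q * τ a))) (fun s _ => by
      rw [hsplit, ← mul_assoc, ← Real.exp_add, neg_mul, neg_add_cancel, Real.exp_zero, one_mul])
      measurableSet_Ici
  simp_rw [hsplit, integral_const_mul]
  exact (by fun_prop : Continuous fun t => Real.exp (q * τ t)).continuousOn.mul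
    (continuousOn_integral_Ici (by fun_prop) hint')

theorem stmt13_general (F0 P : MeasureTheory.Measure ℝ)
    (hF0 : MeasureTheory.IsProbabilityMeasure F0)
    (hP : MeasureTheory.IsProbabilityMeasure P)
    (hF0_pos : F0 (Set.Iio 0) = 0) (hP_pos : P (Set.Iio 0) = 0)
    (hA : StrictMonoOn (cumul (renewalMeasure F0 P)) (Set.Ici 0))
    (F : ℝ → MeasureTheory.ProbabilityMeasure ℝ)
    (hF_pos : ∀ t : ℝ, 0 ≤ t → (F t : MeasureTheory.Measure ℝ) (Set.Iio 0) = 0)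
    (hF : ∀ t : ℝ, 0 ≤ t → ∀ q : ℝ, 0 < q →
      (∫ x, Real.exp (-q * x) ∂(F t : MeasureTheory.Measure ℝ))
        = (1 - mLaplace P q)
          * ∫ s in Set.Ici t,
              Real.exp (-q * (genInv (cumul (renewalMeasure F0 P)) s
                - genInv (cumul (renewalMeasure F0 P)) t))) :
    ContinuousOn F (Set.Ioi 0) := by
  have hτ : Continuous (genInv (cumul (renewalMeasure F0 P))) :=
    continuous_genInv hA <| tendsto_cumul_atTop (renewalMeasure_Ici_eq_top hF0_pos hP_pos)
      (measure_Icc_ne_top_of_strictMonoOn_cumul hA)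
  refine (ProbabilityMeasure.continuousOn_of_continuousOn_integral_exp hF_pos fun q hq => ?_).mono
    Ioi_subset_Ici_self
  have hlaplace_pos : 0 < ∫ x, Real.exp (-q * x) ∂(F 0 : Measure ℝ) :=
    integral_exp_pos (integrable_exp_neg_mul (hF_pos 0 le_rfl) hq.le)
  rw [hF 0 le_rfl q hq] at hlaplace_pos
  have hint := Integrable.of_integral_ne_zero (right_ne_zero_of_mul hlaplace_pos.ne')
  exact (continuousOn_const.mul (continuousOn_integral_Ici_exp_neg_mul_sub hτ hint)).congr
    fun t ht => hF t ht q hq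

/-- For probability measures `F0, P` on `ℝ₊` with `P({0}) < 1`
and with the cumulative renewal function `A(·)` strictly increasing on `[0,∞)`,
the renewal-scaled solution `t ↦ F_t` (the probability measure with Laplace
transform `F̂_t(q) = (1 − P̂(q)) ∫_t^∞ e^{-q(τ(s) − τ(t))} ds`, `τ = A†`) is
continuous for `t > 0` into the probability measures with the weak topology. -/
theorem stmt13 (F0 P : MeasureTheory.Measure ℝ)
    (hF0 : MeasureTheory.IsProbabilityMeasure F0)
    (hP : MeasureTheory.IsProbabilityMeasure P)
    (hF0_pos : F0 (Set.Iio 0) = 0) (hP_pos : P (Set.Iio 0) = 0)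
    (hP0 : P {0} < 1)
    (hA : StrictMonoOn (cumul (renewalMeasure F0 P)) (Set.Ici 0))
    (F : ℝ → MeasureTheory.ProbabilityMeasure ℝ)
    (hF_pos : ∀ t : ℝ, 0 ≤ t → (F t : MeasureTheory.Measure ℝ) (Set.Iio 0) = 0)
    (hF : ∀ t : ℝ, 0 ≤ t → ∀ q : ℝ, 0 < q →
      (∫ x, Real.exp (-q * x) ∂(F t : MeasureTheory.Measure ℝ))
        = (1 - mLaplace P q)
          * ∫ s in Set.Ici t,
              Real.exp (-q * (genInv (cumul (renewalMeasure F0 P)) s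
                - genInv (cumul (renewalMeasure F0 P)) t))) :
    ContinuousOn F (Set.Ioi 0) :=
  stmt13_general F0 P hF0 hP hF0_pos hP_pos hA F hF_pos hF
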